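/- arXiv:1205.5162 — 4 statements merged into one kernel-verified Lean document; each statement's English description precedes it below -/
import Mathlib

section
/- In a simple arrangement of n lines, every independent set of lines has size at most 2n/3. -/
/-- A line in the plane, given as the solution set of a nondegenerate linear equation. -/
def IsLine (l : Set (ℝ × ℝ)) : Prop :=
  ∃ a b c : ℝ, (a, b) ≠ (0, 0) ∧ l = {p : ℝ × ℝ | a * p.1 + b * p.2 = c}

/-- The union of all lines of an arrangement. -/
def linesUnion (L : Finset (Set (ℝ × ℝ))) : Set (ℝ × ℝ) :=
  ⋃ l ∈ L, l

/-- A simple arrangement: every member is a line, every two distinct lines intersect,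
and no three distinct lines share a common point. -/
def SimpleArrangement (L : Finset (Set (ℝ × ℝ))) : Prop :=
  (∀ l ∈ L, IsLine l) ∧
  (∀ l₁ ∈ L, ∀ l₂ ∈ L, l₁ ≠ l₂ → (l₁ ∩ l₂).Nonempty) ∧
  (∀ l₁ ∈ L, ∀ l₂ ∈ L, ∀ l₃ ∈ L, l₁ ≠ l₂ → l₁ ≠ l₃ → l₂ ≠ l₃ → l₁ ∩ l₂ ∩ l₃ = ∅)

/-- A cell of the arrangement: a connected component of the complement of the lines. -/
def IsCell (L : Finset (Set (ℝ × ℝ))) (c : Set (ℝ × ℝ)) : Prop :=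
  ∃ p ∈ (linesUnion L)ᶜ, c = connectedComponentIn (linesUnion L)ᶜ p

/-- A line `l` bounds a cell `c` if `l` contains a nondegenerate segment of the frontier of `c`. -/
def Bounds (l c : Set (ℝ × ℝ)) : Prop :=
  ∃ p q : ℝ × ℝ, p ≠ q ∧ segment ℝ p q ⊆ l ∩ frontier c

/-- The set of lines of the arrangement bounding a given cell. -/
def boundingLines (L : Finset (Set (ℝ × ℝ))) (c : Set (ℝ × ℝ)) : Set (Set (ℝ × ℝ)) :=
  {l | l ∈ L ∧ Bounds l c}

/-- The vertices of the arrangement: intersection points of two distinct lines. -/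
def vertices (L : Finset (Set (ℝ × ℝ))) : Set (ℝ × ℝ) :=
  {p | ∃ l₁ ∈ L, ∃ l₂ ∈ L, l₁ ≠ l₂ ∧ p ∈ l₁ ∧ p ∈ l₂}

/-- A coloring of the lines is proper if no cell is monochromatic, i.e. every cell has
two bounding lines of different colors. -/
def ProperColoring {α : Type*} (L : Finset (Set (ℝ × ℝ))) (col : Set (ℝ × ℝ) → α) : Prop :=
  ∀ c, IsCell L c → ∃ l₁ ∈ boundingLines L c, ∃ l₂ ∈ boundingLines L c, col l₁ ≠ col l₂

/-- A set `S` of lines is independent if no cell is bounded exclusively by lines of `S`. -/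
def IndepLines (L S : Finset (Set (ℝ × ℝ))) : Prop :=
  ∀ c, IsCell L c → ¬(boundingLines L c ⊆ ↑S)

/-- The number of connected components of a planar set. -/
noncomputable def numComponents (S : Set (ℝ × ℝ)) : ℕ :=
  {T : Set (ℝ × ℝ) | ∃ p ∈ S, T = connectedComponentIn S p}.ncard

/-!
Identify a cell of an arrangement with its sign vector. A line meeting `k` earlier lines in `k`
distinct points crosses `k + 1` of their cells and splits each of them, so an arrangement of `s`
lines in general position has at least `s (s + 1) / 2 + 1` cells. If `S` is independent, every
cell of the arrangement of `S` is crossed by one of the `n - s` lines outside `S` (a cell crossed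
by none would be a cell of the whole arrangement bounded only by lines of `S`), and each of these
lines crosses at most `s + 1` cells. Hence `s (s + 1) / 2 + 1 ≤ (n - s) (s + 1)`, forcing `3 s ≤ 2 n`.
-/

open Set Filter Topology

structure LineEq where
  a : ℝ
  b : ℝ
  c : ℝ
  nondeg : (a, b) ≠ (0, 0)

namespace LineEq

variable (E F : LineEq)

def eval (p : ℝ × ℝ) : ℝ := E.a * p.1 + E.b * p.2 - E.c

def cross : ℝ := E.a * F.b - F.a * E.b

/-- The parametrization `t ↦ p₀ + t (-b, a)` of the line, `p₀` the foot of the perpendicular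
from the origin. -/
noncomputable def point (t : ℝ) : ℝ × ℝ :=
  (E.a * E.c / (E.a ^ 2 + E.b ^ 2) - t * E.b, E.b * E.c / (E.a ^ 2 + E.b ^ 2) + t * E.a)

/-- `E.point (E.crossParam F)` is the crossing point of the two lines. -/
noncomputable def crossParam : ℝ := -F.eval (E.point 0) / E.cross F

lemma sq_add_sq_pos : 0 < E.a ^ 2 + E.b ^ 2 := by
  have := E.nondeg
  rcases eq_or_ne E.a 0 with ha | ha
  · have hb : E.b ≠ 0 := fun hb => this (by simp [ha, hb])
    positivity
  · positivity

lemma continuous_eval : Continuous E.eval := by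
  unfold eval
  fun_prop

lemma eval_add_smul (p : ℝ × ℝ) (s : ℝ) :
    E.eval (p + s • (E.a, E.b)) = E.eval p + s * (E.a ^ 2 + E.b ^ 2) := by
  simp only [eval, Prod.fst_add, Prod.snd_add, Prod.smul_fst, Prod.smul_snd, smul_eq_mul]
  ring

lemma convex_setOf_eval_mul_pos (r : ℝ) : Convex ℝ {q | 0 < E.eval q * r} := by
  have hlin : IsLinearMap ℝ fun q : ℝ × ℝ => r * E.a * q.1 + r * E.b * q.2 :=
    ⟨fun x y => by simp only [Prod.fst_add, Prod.snd_add]; ring,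
      fun s x => by simp only [Prod.smul_fst, Prod.smul_snd, smul_eq_mul]; ring⟩
  have hset : {q | 0 < E.eval q * r} = {q : ℝ × ℝ | r * E.c < r * E.a * q.1 + r * E.b * q.2} := by
    ext q
    simp only [eval, mem_ofPred_eq]
    constructor <;> intro h <;> linarith
  rw [hset]
  exact convex_halfSpace_gt hlin _

lemma eval_point (t : ℝ) : E.eval (E.point t) = 0 := by
  have := E.sq_add_sq_pos
  simp only [eval, point]
  field_simp
  ring

lemma exists_point_eq {p : ℝ × ℝ} (hp : E.eval p = 0) : ∃ t, E.point t = p := by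
  have hD := E.sq_add_sq_pos
  have hc : E.c = E.a * p.1 + E.b * p.2 := by rw [eval] at hp; linarith
  refine ⟨(E.a * p.2 - E.b * p.1) / (E.a ^ 2 + E.b ^ 2), Prod.ext ?_ ?_⟩ <;>
  · simp only [point, hc]
    field_simp
    ring

lemma cross_swap : F.cross E = -E.cross F := by
  simp only [cross]
  ring

lemma eval_point_eq (t : ℝ) : F.eval (E.point t) = E.cross F * t + F.eval (E.point 0) := by
  simp only [eval, point, cross]
  ring

lemma eval_point_eq_mul (h : E.cross F ≠ 0) (t : ℝ) :
    F.eval (E.point t) = E.cross F * (t - E.crossParam F) := by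
  rw [eval_point_eq, crossParam]
  field_simp
  ring

lemma eval_point_pos_iff (h : E.cross F ≠ 0) {t : ℝ} (ht : t ≠ E.crossParam F) :
    0 < F.eval (E.point t) ↔ (0 < E.cross F ↔ E.crossParam F < t) := by
  rw [eval_point_eq_mul E F h, mul_pos_iff, sub_pos, sub_neg]
  have hA := h.lt_or_gt
  have ht' := ht.lt_or_gt
  constructor <;> intro <;> grind

lemma eval_eq_zero_of_cross_eq_zero (h : E.cross F = 0) {z q : ℝ × ℝ} (hz : E.eval z = 0)
    (hz' : F.eval z = 0) (hq : E.eval q = 0) : F.eval q = 0 := by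
  obtain ⟨s, rfl⟩ := E.exists_point_eq hz
  obtain ⟨t, rfl⟩ := E.exists_point_eq hq
  rw [eval_point_eq, h] at hz' ⊢
  simpa using hz'

/-- Parallel lines with a common point coincide. -/
lemma eval_eq_zero_iff_of_cross_eq_zero (h : E.cross F = 0) {z : ℝ × ℝ} (hz : E.eval z = 0)
    (hz' : F.eval z = 0) (q : ℝ × ℝ) : E.eval q = 0 ↔ F.eval q = 0 :=
  ⟨E.eval_eq_zero_of_cross_eq_zero F h hz hz',
    F.eval_eq_zero_of_cross_eq_zero E (by rw [cross_swap, h, neg_zero]) hz' hz⟩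

lemma subsingleton_eval_eq_zero (h : E.cross F ≠ 0) :
    {q | E.eval q = 0 ∧ F.eval q = 0}.Subsingleton := by
  rintro _ ⟨hp, hp'⟩ _ ⟨hq, hq'⟩
  obtain ⟨s, rfl⟩ := E.exists_point_eq hp
  obtain ⟨t, rfl⟩ := E.exists_point_eq hq
  rw [E.eval_point_eq_mul F h, mul_eq_zero, sub_eq_zero] at hp' hq'
  rw [hp'.resolve_left h, hq'.resolve_left h]

lemma exists_mem_eval_pos_and_neg {U : Set (ℝ × ℝ)} (hU : IsOpen U) {p : ℝ × ℝ} (hp : p ∈ U)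
    (hp0 : E.eval p = 0) : (∃ q ∈ U, 0 < E.eval q) ∧ ∃ q ∈ U, E.eval q < 0 := by
  have hcont : Continuous fun s : ℝ => p + s • (E.a, E.b) := by fun_prop
  have hU0 : ∀ᶠ s in 𝓝 (0 : ℝ), p + s • (E.a, E.b) ∈ U :=
    hcont.continuousAt.preimage_mem_nhds (by simpa using hU.mem_nhds hp)
  have hD := E.sq_add_sq_pos
  constructor
  · obtain ⟨s, hsU, hs⟩ := ((hU0.filter_mono nhdsWithin_le_nhds).and
      (self_mem_nhdsWithin (s := Ioi 0))).exists
    exact ⟨_, hsU, by rw [eval_add_smul, hp0]; nlinarith⟩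
  · obtain ⟨s, hsU, hs⟩ := ((hU0.filter_mono nhdsWithin_le_nhds).and
      (self_mem_nhdsWithin (s := Iio 0))).exists
    exact ⟨_, hsU, by rw [eval_add_smul, hp0]; nlinarith⟩

end LineEq

lemma IsPreconnected.mul_pos_of_ne_zero {X : Type*} [TopologicalSpace X] {s : Set X}
    (hs : IsPreconnected s) {g : X → ℝ} (hg : ContinuousOn g s) (h0 : ∀ x ∈ s, g x ≠ 0)
    {p q : X} (hp : p ∈ s) (hq : q ∈ s) : 0 < g p * g q := by
  by_contra! h
  obtain ⟨x, hx, hx0⟩ : (0 : ℝ) ∈ g '' s := by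
    rcases mul_nonpos_iff.1 h with ⟨hp0, hq0⟩ | ⟨hp0, hq0⟩
    · exact hs.intermediate_value hq hp hg ⟨hq0, hp0⟩
    · exact hs.intermediate_value hp hq hg ⟨hp0, hq0⟩
  exact h0 x hx hx0

section SignPatterns

variable {ι : Type*} (e : ι → LineEq)

def OffLines (T : Finset ι) (p : ℝ × ℝ) : Prop :=
  ∀ m ∈ T, (e m).eval p ≠ 0

def signCell (T : Finset ι) (p : ℝ × ℝ) : Set (ℝ × ℝ) :=
  {q | ∀ m ∈ T, 0 < (e m).eval q * (e m).eval p}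

noncomputable def signPattern (T : Finset ι) (p : ℝ × ℝ) : Finset ι :=
  T.filter fun m => 0 < (e m).eval p

/-- The cells of the arrangement `T`, each represented by its sign pattern. -/
def patterns (T : Finset ι) : Set (Finset ι) :=
  signPattern e T '' {p | OffLines e T p}

/-- The cells of the arrangement `T` crossed by the line `l`. -/
def linePatterns (T : Finset ι) (l : ι) : Set (Finset ι) :=
  signPattern e T '' {p | OffLines e T p ∧ (e l).eval p = 0}

variable {e} {T : Finset ι} {p q : ℝ × ℝ}

lemma mem_signCell_self (hp : OffLines e T p) : p ∈ signCell e T p :=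
  fun m hm => mul_self_pos.2 (hp m hm)

lemma OffLines.of_mem_signCell (hq : q ∈ signCell e T p) : OffLines e T q :=
  fun m hm h0 => by simpa [h0] using hq m hm

lemma signPattern_eq_of_mem_signCell (hq : q ∈ signCell e T p) :
    signPattern e T q = signPattern e T p :=
  Finset.filter_congr fun m hm => pos_iff_pos_of_mul_pos (hq m hm)

lemma isOpen_signCell (T : Finset ι) (p : ℝ × ℝ) : IsOpen (signCell e T p) := by
  simp only [signCell, ofPred_forall]
  exact isOpen_biInter_finset fun m _ =>
    isOpen_lt continuous_const ((e m).continuous_eval.mul continuous_const)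

lemma convex_signCell (T : Finset ι) (p : ℝ × ℝ) : Convex ℝ (signCell e T p) := by
  simp only [signCell, ofPred_forall]
  exact convex_iInter₂ fun m _ => (e m).convex_setOf_eval_mul_pos _

lemma frontier_signCell_subset (hp : OffLines e T p) :
    frontier (signCell e T p) ⊆ {q | ∃ m ∈ T, (e m).eval q = 0} := by
  intro q hq
  rw [(isOpen_signCell T p).frontier_eq] at hq
  rw [mem_ofPred_eq]
  by_contra! hoff
  refine hq.2 fun m hm => lt_of_le_of_ne ?_ (mul_ne_zero (hoff m hm) (hp m hm)).symm
  refine closure_minimal (t := {x | 0 ≤ (e m).eval x * (e m).eval p})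
    (fun x hx => (hx m hm).le) ?_ hq.1
  exact isClosed_le continuous_const ((e m).continuous_eval.mul continuous_const)

/-- On a connected component of `U` every `eval` keeps its sign. -/
lemma signCell_eq_connectedComponentIn {U : Set (ℝ × ℝ)} (hU : ∀ x ∈ U, OffLines e T x)
    (hC : signCell e T p ⊆ U) (hp : OffLines e T p) :
    signCell e T p = connectedComponentIn U p := by
  have hpU : p ∈ U := hC (mem_signCell_self hp)
  refine (convex_signCell T p).isPreconnected.subset_connectedComponentIn
    (mem_signCell_self hp) hC |>.antisymm fun x hx m hm => ?_
  exact isPreconnected_connectedComponentIn.mul_pos_of_ne_zero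
    (e m).continuous_eval.continuousOn
    (fun y hy => hU y (connectedComponentIn_subset U p hy) m hm) hx
    (mem_connectedComponentIn hpU)

lemma patterns_subset_powerset (T : Finset ι) : patterns e T ⊆ T.powerset := by
  rintro _ ⟨p, -, rfl⟩
  exact Finset.mem_powerset.2 (Finset.filter_subset _ _)

lemma patterns_finite (T : Finset ι) : (patterns e T).Finite :=
  T.powerset.finite_toSet.subset (patterns_subset_powerset T)

lemma linePatterns_subset_patterns (T : Finset ι) (l : ι) : linePatterns e T l ⊆ patterns e T :=
  image_mono fun _ hp => hp.1

end SignPatterns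

section Cuts

variable {ι : Type*} (T : Finset ι) (g : ι → ℝ)

lemma finite_range_filter_lt : (range fun t => T.filter (g · < t)).Finite :=
  T.powerset.finite_toSet.subset <| by
    rintro _ ⟨t, rfl⟩
    exact Finset.mem_powerset.2 (Finset.filter_subset _ _)

/-- The sets `{m ∈ T | g m < t}` form a chain, so they are told apart by their cardinalities. -/
lemma ncard_range_filter_lt_le : (range fun t => T.filter (g · < t)).ncard ≤ T.card + 1 := by
  have hinj : InjOn Finset.card (range fun t => T.filter (g · < t)) := by
    rintro _ ⟨s, rfl⟩ _ ⟨t, rfl⟩ hst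
    wlog hle : s ≤ t generalizing s t
    · exact (this t s hst.symm (le_of_not_ge hle)).symm
    refine Finset.eq_of_subset_of_card_le (fun m hm => ?_) hst.ge
    rw [Finset.mem_filter] at hm ⊢
    exact ⟨hm.1, hm.2.trans_le hle⟩
  calc _ ≤ (Finset.range (T.card + 1) : Set ℕ).ncard := by
        refine ncard_le_ncard_of_injOn _ ?_ hinj (Finset.finite_toSet _)
        rintro _ ⟨t, rfl⟩
        exact Finset.mem_range_succ_iff.2 (Finset.card_filter_le _ _)
    _ = T.card + 1 := by simp

lemma exists_gt_forall_le_or_lt (x : ℝ) : ∃ t, x < t ∧ ∀ m ∈ T, g m ≤ x ∨ t < g m := by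
  have : ∀ᶠ t in 𝓝[>] x, x < t ∧ ∀ m ∈ T, g m ≤ x ∨ t < g m := by
    refine (eventually_mem_nhdsWithin (s := Ioi x)).and ((eventually_all_finset T).2 fun m _ => ?_)
    rcases le_or_gt (g m) x with h | h
    · exact .of_forall fun _ => .inl h
    · exact ((eventually_lt_nhds h).filter_mono nhdsWithin_le_nhds).mono fun _ => .inr
  exact this.exists

/-- Witnesses: a point below all values of `g`, and for each `m` a point just above `g m`. -/
lemma card_add_one_le_ncard_image_filter_lt (hg : InjOn g T) :
    T.card + 1 ≤ ((fun t => T.filter (g · < t)) '' {t | ∀ m ∈ T, g m ≠ t}).ncard := by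
  classical
  choose u hu using exists_gt_forall_le_or_lt T g
  obtain ⟨t₀, ht₀⟩ : ∃ t, ∀ m ∈ T, t < g m :=
    ((eventually_all_finset T).2 fun m _ => eventually_lt_atBot (g m)).exists
  have hmem : ∀ m ∈ T, ∀ m' ∈ T, g m' < u (g m) ↔ g m' ≤ g m := fun m _ m' hm' =>
    ⟨fun h => ((hu (g m)).2 m' hm').resolve_right h.not_gt,
      fun h => h.trans_lt (hu (g m)).1⟩
  set F := insert ∅ (T.image fun m => T.filter (g · < u (g m)))
  have hsub : (F : Set (Finset ι)) ⊆ (fun t => T.filter (g · < t)) '' {t | ∀ m ∈ T, g m ≠ t} := by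
    intro C hC
    rcases Finset.mem_insert.1 hC with rfl | hC
    · refine ⟨t₀, fun m hm => (ht₀ m hm).ne', Finset.filter_eq_empty_iff.2 fun m hm => ?_⟩
      exact (ht₀ m hm).le.not_gt
    · obtain ⟨m, hm, rfl⟩ := Finset.mem_image.1 hC
      refine ⟨u (g m), fun m' hm' h => ?_, rfl⟩
      rcases (hu (g m)).2 m' hm' with h' | h' <;> linarith [(hu (g m)).1]
  have hcard : F.card = T.card + 1 := by
    rw [Finset.card_insert_of_notMem, Finset.card_image_of_injOn]
    · intro m hm m' hm' h
      rw [Finset.mem_coe] at hm hm'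
      have h₁ := Finset.ext_iff.1 h m
      have h₂ := Finset.ext_iff.1 h m'
      rw [Finset.mem_filter, Finset.mem_filter, and_iff_right hm, and_iff_right hm] at h₁
      rw [Finset.mem_filter, Finset.mem_filter, and_iff_right hm', and_iff_right hm'] at h₂
      exact hg hm hm' (le_antisymm ((hmem m' hm' m hm).1 (h₁.1 ((hmem m hm m hm).2 le_rfl)))
        ((hmem m hm m' hm').1 (h₂.2 ((hmem m' hm' m' hm').2 le_rfl))))
    · simp only [Finset.mem_image, not_exists, not_and]
      intro m hm h
      exact Finset.notMem_empty m (h ▸ Finset.mem_filter.2 ⟨hm, (hmem m hm m hm).2 le_rfl⟩)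
  rw [← hcard, ← ncard_coe_finset]
  exact ncard_le_ncard hsub ((finite_range_filter_lt T g).subset (image_subset_range _ _))

lemma ncard_image_filter_iff_lt (σ : ι → Prop) [DecidablePred σ] (s : Set ℝ) :
    ((fun t => T.filter fun m => σ m ↔ g m < t) '' s).ncard =
      ((fun t => T.filter (g · < t)) '' s).ncard := by
  classical
  have hflip : InjOn (fun C : Finset ι => T.filter fun m => σ m ↔ m ∈ C) {C | C ⊆ T} := by
    intro C hC C' hC' h
    ext m
    by_cases hm : m ∈ T
    · have := Finset.ext_iff.1 h m
      simp only [Finset.mem_filter, hm, true_and] at this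
      tauto
    · exact iff_of_false (fun h => hm (hC h)) (fun h => hm (hC' h))
  rw [← (hflip.mono ?_).ncard_image, image_image]
  · refine congrArg ncard (image_congr fun t _ => Finset.filter_congr fun m hm => ?_)
    rw [Finset.mem_filter, and_iff_right hm]
    tauto
  · rintro _ ⟨t, -, rfl⟩
    exact Finset.filter_subset _ _

end Cuts

section Counting

variable {ι : Type*} {e : ι → LineEq} {T : Finset ι} {l : ι} {p : ℝ × ℝ}

structure GeneralPosition (e : ι → LineEq) (T : Finset ι) : Prop where
  cross_ne_zero : ∀ l ∈ T, ∀ m ∈ T, l ≠ m → (e l).cross (e m) ≠ 0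
  not_concurrent : ∀ l ∈ T, ∀ m ∈ T, ∀ m' ∈ T, l ≠ m → l ≠ m' → m ≠ m' → ∀ q,
    (e l).eval q = 0 → (e m).eval q = 0 → (e m').eval q ≠ 0

lemma GeneralPosition.mono {L : Finset ι} (h : GeneralPosition e L) (hT : T ⊆ L) :
    GeneralPosition e T :=
  ⟨fun l hl m hm => h.cross_ne_zero l (hT hl) m (hT hm),
    fun l hl m hm m' hm' => h.not_concurrent l (hT hl) m (hT hm) m' (hT hm')⟩

lemma linePatterns_eq (hcross : ∀ m ∈ T, (e l).cross (e m) ≠ 0) :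
    linePatterns e T l =
      (fun t => T.filter fun m => 0 < (e l).cross (e m) ↔ (e l).crossParam (e m) < t) ''
        {t | ∀ m ∈ T, (e l).crossParam (e m) ≠ t} := by
  have hoff : ∀ t, OffLines e T ((e l).point t) ↔ ∀ m ∈ T, (e l).crossParam (e m) ≠ t :=
    fun t => forall₂_congr fun m hm => by
      rw [(e l).eval_point_eq_mul _ (hcross m hm), mul_ne_zero_iff, sub_ne_zero]
      exact ⟨fun h => h.2.symm, fun h => ⟨hcross m hm, h.symm⟩⟩
  have hpat : ∀ t, OffLines e T ((e l).point t) → signPattern e T ((e l).point t) =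
      T.filter fun m => 0 < (e l).cross (e m) ↔ (e l).crossParam (e m) < t :=
    fun t ht => Finset.filter_congr fun m hm =>
      (e l).eval_point_pos_iff _ (hcross m hm) ((hoff t).1 ht m hm).symm
  ext P
  constructor
  · rintro ⟨p, ⟨hp, hlp⟩, rfl⟩
    obtain ⟨t, rfl⟩ := (e l).exists_point_eq hlp
    exact ⟨t, (hoff t).1 hp, (hpat t hp).symm⟩
  · rintro ⟨t, ht, rfl⟩
    exact ⟨(e l).point t, ⟨(hoff t).2 ht, (e l).eval_point t⟩, hpat t ((hoff t).2 ht)⟩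

lemma ncard_linePatterns_le (hcross : ∀ m ∈ T, (e l).cross (e m) ≠ 0) :
    (linePatterns e T l).ncard ≤ T.card + 1 := by
  rw [linePatterns_eq hcross, ncard_image_filter_iff_lt]
  exact (ncard_le_ncard (image_subset_range _ _) (finite_range_filter_lt T _)).trans
    (ncard_range_filter_lt_le T _)

/-- The crossings of `l` with the lines of `T` are distinct points. -/
lemma card_add_one_le_ncard_linePatterns [DecidableEq ι] (h : GeneralPosition e (insert l T))
    (hl : l ∉ T) : T.card + 1 ≤ (linePatterns e T l).ncard := by
  have hlT := Finset.mem_insert_self l T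
  have hne : ∀ m ∈ T, l ≠ m := fun m hm hlm => hl (hlm ▸ hm)
  have hcross : ∀ m ∈ T, (e l).cross (e m) ≠ 0 := fun m hm =>
    h.cross_ne_zero l hlT m (Finset.mem_insert_of_mem hm) (hne m hm)
  rw [linePatterns_eq hcross, ncard_image_filter_iff_lt]
  refine card_add_one_le_ncard_image_filter_lt T _ fun m hm m' hm' heq => ?_
  by_contra hmm'
  have hzero : ∀ k ∈ T, (e k).eval ((e l).point ((e l).crossParam (e k))) = 0 := fun k hk => by
    rw [(e l).eval_point_eq_mul _ (hcross k hk), sub_self, mul_zero]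
  refine h.not_concurrent l hlT m (Finset.mem_insert_of_mem hm) m' (Finset.mem_insert_of_mem hm')
    (hne m hm) (hne m' hm') hmm' _ ((e l).eval_point _) (hzero m hm) ?_
  rw [show (e l).crossParam (e m) = (e l).crossParam (e m') from heq]
  exact hzero m' hm'

lemma offLines_insert [DecidableEq ι] :
    OffLines e (insert l T) p ↔ (e l).eval p ≠ 0 ∧ OffLines e T p :=
  Finset.forall_mem_insert _ _ _

lemma signPattern_insert [DecidableEq ι] : signPattern e (insert l T) p =
    if 0 < (e l).eval p then insert l (signPattern e T p) else signPattern e T p :=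
  Finset.filter_insert _ _ _

/-- A cell of `T` crossed by `l` splits into two cells of `insert l T`, one on each side. -/
lemma insert_signPattern_mem_patterns [DecidableEq ι] (hp : OffLines e T p)
    (hlp : (e l).eval p = 0) :
    insert l (signPattern e T p) ∈ patterns e (insert l T) ∧
      signPattern e T p ∈ patterns e (insert l T) := by
  obtain ⟨⟨q, hq, hlq⟩, ⟨q', hq', hlq'⟩⟩ :=
    (e l).exists_mem_eval_pos_and_neg (isOpen_signCell T p) (mem_signCell_self hp) hlp
  refine ⟨⟨q, offLines_insert.2 ⟨hlq.ne', .of_mem_signCell hq⟩, ?_⟩,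
    ⟨q', offLines_insert.2 ⟨hlq'.ne, .of_mem_signCell hq'⟩, ?_⟩⟩
  · rw [signPattern_insert, if_pos hlq, signPattern_eq_of_mem_signCell hq]
  · rw [signPattern_insert, if_neg hlq'.not_gt, signPattern_eq_of_mem_signCell hq']

/-- Erasing `l` maps the cells of `insert l T` onto those of `T`, and each cell crossed by `l`
has two preimages. -/
lemma ncard_patterns_add_ncard_linePatterns_le [DecidableEq ι] (hl : l ∉ T) :
    (patterns e T).ncard + (linePatterns e T l).ncard ≤ (patterns e (insert l T)).ncard := by
  set X := patterns e (insert l T)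
  set R := (fun Q => Q.erase l) '' (X ∩ {Q | l ∈ Q})
  set N := X \ {Q | l ∈ Q}
  have hX : X.Finite := patterns_finite _
  have hR : R.Finite := (hX.inter_of_left _).image _
  have hlP : ∀ p, l ∉ signPattern e T p := fun p h => hl (Finset.mem_filter.1 h).1
  have hmemR : ∀ p, insert l (signPattern e T p) ∈ X → signPattern e T p ∈ R := fun p h =>
    ⟨_, ⟨h, Finset.mem_insert_self _ _⟩, Finset.erase_insert (hlP p)⟩
  have hmemN : ∀ p, signPattern e T p ∈ X → signPattern e T p ∈ N := fun p h => ⟨h, hlP p⟩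
  have hcover : patterns e T ⊆ R ∪ N := by
    rintro _ ⟨p, hp, rfl⟩
    by_cases hlp : (e l).eval p = 0
    · exact .inl (hmemR p (insert_signPattern_mem_patterns hp hlp).1)
    have hX : signPattern e (insert l T) p ∈ X := ⟨p, offLines_insert.2 ⟨hlp, hp⟩, rfl⟩
    rw [signPattern_insert] at hX
    split_ifs at hX
    · exact .inl (hmemR p hX)
    · exact .inr (hmemN p hX)
  have hline : linePatterns e T l ⊆ R ∩ N := by
    rintro _ ⟨p, ⟨hp, hlp⟩, rfl⟩
    have h := insert_signPattern_mem_patterns hp hlp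
    exact ⟨hmemR p h.1, hmemN p h.2⟩
  calc (patterns e T).ncard + (linePatterns e T l).ncard
      ≤ (R ∪ N).ncard + (R ∩ N).ncard :=
        add_le_add (ncard_le_ncard hcover (hR.union hX.sdiff)) (ncard_le_ncard hline (hR.inter_of_left _))
    _ = R.ncard + N.ncard := ncard_union_add_ncard_inter _ _ hR hX.sdiff
    _ ≤ (X ∩ {Q | l ∈ Q}).ncard + N.ncard :=
        Nat.add_le_add_right (ncard_image_le (hX.inter_of_left _)) _
    _ = X.ncard := ncard_inter_add_ncard_sdiff_eq_ncard _ _ hX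

lemma card_mul_succ_add_two_le_two_mul_ncard_patterns (hT : GeneralPosition e T) :
    T.card * (T.card + 1) + 2 ≤ 2 * (patterns e T).ncard := by
  classical
  induction T using Finset.induction_on with
  | empty =>
    have : patterns e (∅ : Finset ι) = {∅} := by
      simp [patterns, signPattern, OffLines]
    simp [this]
  | insert l T hl ih =>
    have h₁ := ih (hT.mono (Finset.subset_insert _ _))
    have h₂ := card_add_one_le_ncard_linePatterns hT hl
    have h₃ := ncard_patterns_add_ncard_linePatterns_le (e := e) hl
    rw [Finset.card_insert_of_notMem hl]
    nlinarith

end Counting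

section Arrangement

variable {e : Set (ℝ × ℝ) → LineEq} {L S : Finset (Set (ℝ × ℝ))}

lemma exists_lineEq (h : ∀ l ∈ L, IsLine l) :
    ∃ e : Set (ℝ × ℝ) → LineEq, ∀ l ∈ L, ∀ q, q ∈ l ↔ (e l).eval q = 0 := by
  have : ∀ l, ∃ E : LineEq, l ∈ L → ∀ q, q ∈ l ↔ E.eval q = 0 := by
    intro l
    by_cases hl : l ∈ L
    · obtain ⟨a, b, c, hab, rfl⟩ := h l hl
      exact ⟨⟨a, b, c, hab⟩, fun _ q => by simp [LineEq.eval, sub_eq_zero]⟩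
    · exact ⟨⟨1, 0, 0, by simp⟩, fun h => absurd h hl⟩
  choose e he using this
  exact ⟨e, fun l hl => he l hl⟩

lemma SimpleArrangement.generalPosition (hL : SimpleArrangement L)
    (he : ∀ l ∈ L, ∀ q, q ∈ l ↔ (e l).eval q = 0) : GeneralPosition e L where
  cross_ne_zero l hl m hm hne h0 := by
    obtain ⟨z, hzl, hzm⟩ := hL.2.1 l hl m hm hne
    refine hne (Set.ext fun q => ?_)
    rw [he l hl, he m hm]
    exact (e l).eval_eq_zero_iff_of_cross_eq_zero _ h0 ((he l hl z).1 hzl) ((he m hm z).1 hzm) q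
  not_concurrent l hl m hm m' hm' hlm hlm' hmm' q hq hq' hq'' :=
    eq_empty_iff_forall_notMem.1 (hL.2.2 l hl m hm m' hm' hlm hlm' hmm') q
      ⟨⟨(he l hl q).2 hq, (he m hm q).2 hq'⟩, (he m' hm' q).2 hq''⟩

/-- Every cell of `S` is crossed by a line outside `S`: otherwise it would be a cell of `L`, and
its bounding segments would lie in the finitely many crossings with lines of `S`. -/
lemma exists_mem_sdiff_meets_signCell (hS : S ⊆ L) (he : ∀ l ∈ L, ∀ q, q ∈ l ↔ (e l).eval q = 0)
    (hL : GeneralPosition e L) (hind : IndepLines L S) {p : ℝ × ℝ} (hp : OffLines e S p) :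
    ∃ l ∈ L \ S, ∃ q ∈ signCell e S p, (e l).eval q = 0 := by
  by_contra! hmiss
  have hU : ∀ x ∈ (linesUnion L)ᶜ, OffLines e S x := fun x hx m hm h0 =>
    hx (mem_biUnion (Finset.mem_coe.2 (hS hm)) ((he m (hS hm) x).2 h0))
  have hC : signCell e S p ⊆ (linesUnion L)ᶜ := by
    intro q hq hqL
    obtain ⟨l, hl, hql⟩ := mem_iUnion₂.1 hqL
    rw [he l hl] at hql
    by_cases hlS : l ∈ S
    · exact OffLines.of_mem_signCell hq l hlS hql
    · exact hmiss l (Finset.mem_sdiff.2 ⟨hl, hlS⟩) q hq hql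
  have hcell : IsCell L (signCell e S p) :=
    ⟨p, hC (mem_signCell_self hp), signCell_eq_connectedComponentIn hU hC hp⟩
  obtain ⟨l, ⟨hl, P, Q, hPQ, hseg⟩, hlS⟩ := not_subset.1 (hind _ hcell)
  have hfin : (⋃ m ∈ S, l ∩ m).Finite := S.finite_toSet.biUnion fun m hm =>
    Subsingleton.finite <| ((e l).subsingleton_eval_eq_zero (e m)
      (hL.cross_ne_zero l hl m (hS hm) fun h => hlS (h ▸ hm))).anti
        fun x hx => ⟨(he l hl x).1 hx.1, (he m (hS hm) x).1 hx.2⟩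
  refine (convex_segment P Q).isPreconnected.infinite_of_nontrivial
    ⟨P, left_mem_segment _ _ _, Q, right_mem_segment _ _ _, hPQ⟩ (hfin.subset fun x hx => ?_)
  obtain ⟨m, hm, hxm⟩ := frontier_signCell_subset hp (hseg hx).2
  exact mem_biUnion hm ⟨(hseg hx).1, (he m (hS hm) x).2 hxm⟩

lemma ncard_patterns_le_of_indepLines (hS : S ⊆ L)
    (he : ∀ l ∈ L, ∀ q, q ∈ l ↔ (e l).eval q = 0) (hL : GeneralPosition e L)
    (hind : IndepLines L S) : (patterns e S).ncard ≤ (L \ S).card * (S.card + 1) := by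
  have hcover : patterns e S ⊆ ⋃ l ∈ L \ S, linePatterns e S l := by
    rintro _ ⟨p, hp, rfl⟩
    obtain ⟨l, hl, q, hq, hlq⟩ := exists_mem_sdiff_meets_signCell hS he hL hind hp
    exact mem_biUnion hl ⟨q, ⟨.of_mem_signCell hq, hlq⟩, signPattern_eq_of_mem_signCell hq⟩
  calc (patterns e S).ncard ≤ (⋃ l ∈ L \ S, linePatterns e S l).ncard :=
        ncard_le_ncard hcover <| (patterns_finite S).subset <|
          iUnion₂_subset fun l _ => linePatterns_subset_patterns S l
    _ ≤ ∑ l ∈ L \ S, (linePatterns e S l).ncard := Finset.set_ncard_biUnion_le _ _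
    _ ≤ ∑ _l ∈ L \ S, (S.card + 1) := Finset.sum_le_sum fun l hl =>
        ncard_linePatterns_le fun m hm => hL.cross_ne_zero l (Finset.mem_sdiff.1 hl).1 m (hS hm)
          fun h => (Finset.mem_sdiff.1 hl).2 (h ▸ hm)
    _ = (L \ S).card * (S.card + 1) := by rw [Finset.sum_const, smul_eq_mul]

end Arrangement

theorem stmt6 (L S : Finset (Set (ℝ × ℝ))) (n : ℕ) (hL : SimpleArrangement L) (hn : L.card = n)
    (hS : S ⊆ L) (hind : IndepLines L S) :
    (S.card : ℝ) ≤ 2 * n / 3 := by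
  obtain ⟨e, he⟩ := exists_lineEq hL.1
  have hgp := hL.generalPosition he
  have hlower := card_mul_succ_add_two_le_two_mul_ncard_patterns (hgp.mono hS)
  have hupper := ncard_patterns_le_of_indepLines hS he hgp hind
  obtain ⟨d, rfl⟩ := Nat.exists_eq_add_of_le (hn ▸ Finset.card_le_card hS)
  rw [Finset.card_sdiff_of_subset hS, hn, Nat.add_sub_cancel_left] at hupper
  have h3 : 3 * S.card ≤ 2 * (S.card + d) := by nlinarith
  rw [le_div_iff₀ three_pos, mul_comm]
  exact_mod_cast h3
end

section
/- For every q ≥ 0 there exists a simple arrangement G of 2^q lines together with a set W of at most 2^{q+1} vertical lines ('snapshots') such that for every two distinct lines ℓ, ℓ' of G there is a vertical line in W along which ℓ and ℓ' are consecutive in the top-to-bottom order of the arrangement lines. -/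
/-! The lines are the tangents `y = i x - i² / 2` to the parabola `y = x² / 2` at the integers
`i < 2 ^ q`. At abscissa `x` the tangent at `t` has height `x² / 2 - (x - t)² / 2`, so the
top-to-bottom order of the lines is the order of the integers `i` by distance to `x`. At
`x = (i + j) / 2 + 1 / 8` an integer `k ≠ i, j` strictly between `i` and `j` is closer to `x` than
both, and any other `k` is farther than both; since `2 x ∉ ℤ`, no two integers are equidistant
from `x`. -/

/-- The tangent to the parabola `y = x² / 2` at abscissa `t`, as a (slope, intercept) pair. -/
noncomputable def parabolaTangent (t : ℝ) : ℝ × ℝ := (t, -t ^ 2 / 2)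

theorem parabolaTangent_injective : Function.Injective parabolaTangent :=
  fun _ _ h => congrArg Prod.fst h

theorem parabolaTangent_height (t x : ℝ) :
    (parabolaTangent t).1 * x + (parabolaTangent t).2 = x ^ 2 / 2 - (x - t) ^ 2 / 2 := by
  simp only [parabolaTangent]
  ring

theorem parabolaTangent_height_lt_iff {s t x : ℝ} :
    (parabolaTangent s).1 * x + (parabolaTangent s).2 <
        (parabolaTangent t).1 * x + (parabolaTangent t).2 ↔
      (x - t) ^ 2 < (x - s) ^ 2 := by
  simp only [parabolaTangent_height]
  constructor <;> intro h <;> linarith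

theorem sq_sub_eq_sq_sub_iff {s t x : ℝ} :
    (x - s) ^ 2 = (x - t) ^ 2 ↔ s = t ∨ s + t = 2 * x := by
  rw [sq_eq_sq_iff_eq_or_eq_neg]
  constructor <;> rintro (h | h) <;> first | (left; linarith) | (right; linarith)

theorem parabolaTangent_height_eq_iff {s t x : ℝ} :
    (parabolaTangent s).1 * x + (parabolaTangent s).2 =
        (parabolaTangent t).1 * x + (parabolaTangent t).2 ↔
      s = t ∨ s + t = 2 * x := by
  rw [parabolaTangent_height, parabolaTangent_height, ← sq_sub_eq_sq_sub_iff]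
  constructor <;> intro h <;> linarith

theorem parabolaTangent_not_concurrent {a b c : ℝ} (hab : a ≠ b) (hac : a ≠ c) (hbc : b ≠ c)
    (x : ℝ) :
    ¬((parabolaTangent a).1 * x + (parabolaTangent a).2 =
        (parabolaTangent b).1 * x + (parabolaTangent b).2 ∧
      (parabolaTangent b).1 * x + (parabolaTangent b).2 =
        (parabolaTangent c).1 * x + (parabolaTangent c).2) := by
  simp only [parabolaTangent_height_eq_iff, hab, hbc, false_or]
  rintro ⟨hab', hbc'⟩
  exact hac (by linarith)

noncomputable def snapshot (m : ℕ) : ℝ := m / 2 + 1 / 8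

theorem two_mul_snapshot (m : ℕ) : 2 * snapshot m = m + 1 / 4 := by
  simp only [snapshot]
  ring

theorem natCast_add_ne_two_mul_snapshot (a b m : ℕ) : (a : ℝ) + b ≠ 2 * snapshot m := by
  rw [two_mul_snapshot]
  rcases le_or_gt (a + b) m with h | h
  · have : ((a + b : ℕ) : ℝ) ≤ m := by exact_mod_cast h
    push_cast at this
    linarith
  · have : (m : ℝ) + 1 ≤ ((a + b : ℕ) : ℝ) := by exact_mod_cast h
    push_cast at this
    linarith

theorem snapshot_sq_dist_separates {i j k : ℕ} (hij : i ≠ j) (hki : k ≠ i) (hkj : k ≠ j) :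
    let x := snapshot (i + j)
    ((x - i) ^ 2 < (x - k) ^ 2 ∧ (x - j) ^ 2 < (x - k) ^ 2) ∨
      ((x - k) ^ 2 < (x - i) ^ 2 ∧ (x - k) ^ 2 < (x - j) ^ 2) := by
  wlog hlt : i < j generalizing i j
  · have := this hij.symm hkj hki (by omega)
    rw [add_comm j i] at this
    exact this.imp And.symm And.symm
  intro x
  have hx : 2 * x = i + j + 1 / 4 := by simp only [x, two_mul_snapshot]; push_cast; ring
  have hij' : (i : ℝ) + 1 ≤ j := by exact_mod_cast hlt
  rcases (by omega : k < i ∨ (i < k ∧ k < j) ∨ j < k) with h | ⟨h₁, h₂⟩ | h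
  · have : (k : ℝ) + 1 ≤ i := by exact_mod_cast h
    left
    constructor <;> nlinarith
  · have : (i : ℝ) + 1 ≤ k := by exact_mod_cast h₁
    have : (k : ℝ) + 1 ≤ j := by exact_mod_cast h₂
    right
    constructor <;> nlinarith
  · have : (j : ℝ) + 1 ≤ k := by exact_mod_cast h
    left
    constructor <;> nlinarith

noncomputable def tangentArrangement (n : ℕ) : Finset (ℝ × ℝ) :=
  (Finset.range n).image fun i : ℕ => parabolaTangent i

noncomputable def tangentSnapshots (n : ℕ) : Finset ℝ :=
  (Finset.range (2 * n)).image snapshot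

theorem mem_tangentArrangement {n : ℕ} {l : ℝ × ℝ} :
    l ∈ tangentArrangement n ↔ ∃ i < n, parabolaTangent i = l := by
  simp [tangentArrangement]

theorem tangentArrangement_card (n : ℕ) : (tangentArrangement n).card = n := by
  rw [tangentArrangement, Finset.card_image_of_injective, Finset.card_range]
  exact parabolaTangent_injective.comp Nat.cast_injective

theorem tangentSnapshots_card_le (n : ℕ) : (tangentSnapshots n).card ≤ 2 * n :=
  Finset.card_image_le.trans (Finset.card_range _).le

theorem exists_snapshot_of_mem_tangentArrangement {n : ℕ} {l l' : ℝ × ℝ}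
    (hl : l ∈ tangentArrangement n) (hl' : l' ∈ tangentArrangement n) (hne : l ≠ l') :
    ∃ x ∈ tangentSnapshots n,
      (∀ l₁ ∈ tangentArrangement n, ∀ l₂ ∈ tangentArrangement n, l₁ ≠ l₂ →
        l₁.1 * x + l₁.2 ≠ l₂.1 * x + l₂.2) ∧
      ∀ l'' ∈ tangentArrangement n, l'' ≠ l → l'' ≠ l' →
        (l''.1 * x + l''.2 < min (l.1 * x + l.2) (l'.1 * x + l'.2) ∨
          max (l.1 * x + l.2) (l'.1 * x + l'.2) < l''.1 * x + l''.2) := by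
  obtain ⟨i, hi, rfl⟩ := mem_tangentArrangement.mp hl
  obtain ⟨j, hj, rfl⟩ := mem_tangentArrangement.mp hl'
  refine ⟨snapshot (i + j), Finset.mem_image_of_mem _ (Finset.mem_range.mpr (by omega)), ?_, ?_⟩
  · intro l₁ hl₁ l₂ hl₂ hne₁₂
    obtain ⟨a, -, rfl⟩ := mem_tangentArrangement.mp hl₁
    obtain ⟨b, -, rfl⟩ := mem_tangentArrangement.mp hl₂
    rw [Ne, parabolaTangent_height_eq_iff, not_or]
    exact ⟨fun h => hne₁₂ (congrArg _ h), natCast_add_ne_two_mul_snapshot a b _⟩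
  · intro l'' hl'' hki hkj
    obtain ⟨k, -, rfl⟩ := mem_tangentArrangement.mp hl''
    have hij : i ≠ j := by rintro rfl; exact hne rfl
    simp only [lt_min_iff, max_lt_iff, parabolaTangent_height_lt_iff]
    exact snapshot_sq_dist_separates hij (by rintro rfl; exact hki rfl)
      (by rintro rfl; exact hkj rfl)

/-- Lines are encoded as (slope, intercept) pairs: the line `y = a * x + b` is the pair `(a, b)`. -/
theorem stmt10 (q : ℕ) : ∃ G : Finset (ℝ × ℝ),
    G.card = 2 ^ q ∧
    (∀ l₁ ∈ G, ∀ l₂ ∈ G, l₁ ≠ l₂ → l₁.1 ≠ l₂.1) ∧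
    (∀ l₁ ∈ G, ∀ l₂ ∈ G, ∀ l₃ ∈ G, l₁ ≠ l₂ → l₁ ≠ l₃ → l₂ ≠ l₃ →
      ∀ x : ℝ, ¬(l₁.1 * x + l₁.2 = l₂.1 * x + l₂.2 ∧ l₂.1 * x + l₂.2 = l₃.1 * x + l₃.2)) ∧
    ∃ W : Finset ℝ, W.card ≤ 2 ^ (q + 1) ∧
      ∀ l ∈ G, ∀ l' ∈ G, l ≠ l' → ∃ x ∈ W,
        (∀ l₁ ∈ G, ∀ l₂ ∈ G, l₁ ≠ l₂ → l₁.1 * x + l₁.2 ≠ l₂.1 * x + l₂.2) ∧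
        ∀ l'' ∈ G, l'' ≠ l → l'' ≠ l' →
          (l''.1 * x + l''.2 < min (l.1 * x + l.2) (l'.1 * x + l'.2) ∨
           max (l.1 * x + l.2) (l'.1 * x + l'.2) < l''.1 * x + l''.2) := by
  refine ⟨tangentArrangement (2 ^ q), tangentArrangement_card _, ?_, ?_, tangentSnapshots (2 ^ q),
    pow_succ' 2 q ▸ tangentSnapshots_card_le _, fun l hl l' hl' hne =>
      exists_snapshot_of_mem_tangentArrangement hl hl' hne⟩
  · intro l₁ hl₁ l₂ hl₂ hne
    obtain ⟨a, -, rfl⟩ := mem_tangentArrangement.mp hl₁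
    obtain ⟨b, -, rfl⟩ := mem_tangentArrangement.mp hl₂
    exact fun h => hne (congrArg _ h)
  · intro l₁ hl₁ l₂ hl₂ l₃ hl₃ h₁₂ h₁₃ h₂₃
    obtain ⟨a, -, rfl⟩ := mem_tangentArrangement.mp hl₁
    obtain ⟨b, -, rfl⟩ := mem_tangentArrangement.mp hl₂
    obtain ⟨c, -, rfl⟩ := mem_tangentArrangement.mp hl₃
    exact parabolaTangent_not_concurrent (mt (congrArg _) h₁₂) (mt (congrArg _) h₁₃)
      (mt (congrArg _) h₂₃)
end

section
/- In a simple arrangement of n lines, one can choose at most ⌈n/2⌉ cells such that every line of the arrangement contains a boundary segment of at least one chosen cell. -/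
/-!
Two crossing lines of a simple arrangement meet at a point `p` through which no other line passes,
so near `p` one of the quadrants cut out by the two lines lies in a single cell, and both lines
contain a segment of the frontier of that cell. Pairing the lines greedily, one cell per pair (and
one more for a leftover line, which crosses any other line or, if it is alone, bounds a
half-plane), covers `n` lines with at most `⌈n/2⌉` cells.
-/

open Set Filter Topology Metric

theorem Finset.exists_cover_card_le_half {α β : Type*} (P : β → Prop) (R : α → β → Prop)
    (S : Finset α) (hone : ∀ a ∈ S, ∃ b, P b ∧ R a b)
    (hpair : ∀ a ∈ S, ∀ a' ∈ S, a ≠ a' → ∃ b, P b ∧ R a b ∧ R a' b) :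
    ∃ C : Finset β, (∀ b ∈ C, P b) ∧ C.card ≤ (S.card + 1) / 2 ∧ ∀ a ∈ S, ∃ b ∈ C, R a b := by
  classical
  induction S using Finset.strongInduction with
  | H S ih =>
  rcases le_or_gt S.card 1 with hS | hS
  · rcases S.eq_empty_or_nonempty with rfl | ⟨a, ha⟩
    · exact ⟨∅, by simp, by simp, by simp⟩
    obtain ⟨b, hPb, hab⟩ := hone a ha
    have hSa : ∀ a' ∈ S, a' = a := fun a' ha' => Finset.card_le_one.mp hS a' ha' a ha
    refine ⟨{b}, by simpa using hPb, ?_, fun a' ha' => ⟨b, mem_singleton_self b, hSa a' ha' ▸ hab⟩⟩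
    have := S.card_pos.mpr ⟨a, ha⟩
    simp only [card_singleton]
    omega
  · obtain ⟨a, ha, a', ha', hne⟩ := Finset.one_lt_card.mp hS
    set T := (S.erase a).erase a'
    have hTS : ∀ x ∈ T, x ∈ S := fun x hx => mem_of_mem_erase (mem_of_mem_erase hx)
    have hTcard : T.card = S.card - 2 := by
      rw [card_erase_of_mem (mem_erase.mpr ⟨hne.symm, ha'⟩), card_erase_of_mem ha]
      omega
    obtain ⟨C, hCP, hCcard, hCcov⟩ := ih T ((erase_subset _ _).trans_ssubset (erase_ssubset ha))
      (fun x hx => hone x (hTS x hx)) (fun x hx y hy => hpair x (hTS x hx) y (hTS y hy))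
    obtain ⟨b, hPb, hab, ha'b⟩ := hpair a ha a' ha' hne
    refine ⟨insert b C, (forall_mem_insert ..).mpr ⟨hPb, hCP⟩, ?_, fun x hx => ?_⟩
    · have := card_insert_le b C
      omega
    · by_cases hxa : x = a
      · exact ⟨b, mem_insert_self b C, hxa ▸ hab⟩
      by_cases hxa' : x = a'
      · exact ⟨b, mem_insert_self b C, hxa' ▸ ha'b⟩
      obtain ⟨b', hb', hxb'⟩ := hCcov x (mem_erase.mpr ⟨hxa', mem_erase.mpr ⟨hxa, hx⟩⟩)
      exact ⟨b', mem_insert_of_mem hb', hxb'⟩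

theorem closure_diff_subset_frontier_connectedComponentIn {X : Type*} [TopologicalSpace X]
    [LocallyConnectedSpace X] {U Q : Set X} (hU : IsOpen U) (hQ : IsPreconnected Q) (hQU : Q ⊆ U)
    {q : X} (hq : q ∈ Q) :
    closure Q \ U ⊆ frontier (connectedComponentIn U q) := by
  rw [hU.connectedComponentIn.frontier_eq]
  exact sdiff_subset_sdiff (closure_mono (hQ.subset_connectedComponentIn hq hQU))
    (connectedComponentIn_subset U q)

theorem eventually_forall_mem_imp_mem {X : Type*} [TopologicalSpace X] {L : Finset (Set X)}
    (hL : ∀ l ∈ L, IsClosed l) (p : X) : ∀ᶠ q in 𝓝 p, ∀ l ∈ L, q ∈ l → p ∈ l := by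
  refine (Finset.eventually_all L).2 fun l hl => ?_
  by_cases hp : p ∈ l
  · exact Eventually.of_forall fun _ _ => hp
  · exact eventually_of_mem ((hL l hl).isOpen_compl.mem_nhds hp) fun q hq hql => absurd hql hq

section LinearFunctional

variable {E : Type*} [AddCommGroup E] [Module ℝ E]

theorem exists_apply_eq_zero_pos_of_levelSet_ne {φ ψ : E →ₗ[ℝ] ℝ} (hψ : ψ ≠ 0) {p : E}
    (hne : {q | φ q = φ p} ≠ {q | ψ q = ψ p}) : ∃ u, φ u = 0 ∧ 0 < ψ u := by
  by_contra! h
  have hker : LinearMap.ker φ ≤ LinearMap.ker ψ := fun u hu =>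
    le_antisymm (h u hu) (by simpa using h (-u) (by simpa using hu))
  obtain ⟨k, rfl⟩ : ∃ k : ℝ, k • φ = ψ := by
    simpa [Submodule.mem_span_singleton] using
      mem_span_of_iInf_ker_le_ker (ι := Unit) (L := fun _ => φ) (K := ψ) (by simpa using hker)
  have hk : k ≠ 0 := by
    rintro rfl
    exact hψ (zero_smul ℝ φ)
  exact hne (by ext q; simp [hk])

variable [TopologicalSpace E] [ContinuousAdd E] [ContinuousSMul ℝ E]

theorem Convex.inter_halfSpace_ge_subset_closure {V : Set E} (hV : Convex ℝ V) (φ : E →ₗ[ℝ] ℝ)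
    {c : ℝ} {q₀ : E} (hq₀ : q₀ ∈ V) (hq₀c : c < φ q₀) :
    V ∩ {q | c ≤ φ q} ⊆ closure (V ∩ {q | c < φ q}) := by
  rintro x ⟨hxV, hxc : c ≤ φ x⟩
  refine closure_mono ?_ (segment_subset_closure_openSegment (right_mem_segment ℝ q₀ x))
  rw [openSegment_subset_iff]
  intro a b ha hb hab
  refine ⟨hV hq₀ hxV ha.le hb.le hab, ?_⟩
  simp only [mem_ofPred_eq, map_add, map_smul, smul_eq_mul]
  have hsum : c = a * c + b * c := by rw [← add_mul, hab, one_mul]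
  linarith [mul_lt_mul_of_pos_left hq₀c ha, mul_le_mul_of_nonneg_left hxc hb.le]

theorem eventually_add_smul_mem {p : E} {N : Set E} (hN : N ∈ 𝓝 p) (v : E) :
    ∀ᶠ t in 𝓝 (0 : ℝ), p + t • v ∈ N := by
  have hcont : Continuous fun t : ℝ => p + t • v := by fun_prop
  exact hcont.tendsto' 0 p (by simp) hN

end LinearFunctional

theorem IsLine.exists_linearMap {l : Set (ℝ × ℝ)} (h : IsLine l) :
    ∃ φ : ℝ × ℝ →ₗ[ℝ] ℝ, φ ≠ 0 ∧ ∃ c, l = {q | φ q = c} := by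
  obtain ⟨a, b, c, hab, rfl⟩ := h
  refine ⟨a • LinearMap.fst ℝ ℝ ℝ + b • LinearMap.snd ℝ ℝ ℝ, fun h0 => hab ?_, c, by ext; simp⟩
  have ha := LinearMap.congr_fun h0 (1, 0)
  have hb := LinearMap.congr_fun h0 (0, 1)
  simp only [LinearMap.add_apply, LinearMap.smul_apply, LinearMap.fst_apply, LinearMap.snd_apply,
    smul_eq_mul, LinearMap.zero_apply] at ha hb
  simp_all

theorem IsLine.isClosed {l : Set (ℝ × ℝ)} (h : IsLine l) : IsClosed l := by
  obtain ⟨φ, -, c, rfl⟩ := h.exists_linearMap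
  exact isClosed_eq φ.continuous_of_finiteDimensional continuous_const

theorem subset_linesUnion {L : Finset (Set (ℝ × ℝ))} {l : Set (ℝ × ℝ)} (hl : l ∈ L) :
    l ⊆ linesUnion L :=
  subset_biUnion_of_mem (u := id) hl

theorem isClosed_linesUnion {L : Finset (Set (ℝ × ℝ))} (hL : ∀ l ∈ L, IsLine l) :
    IsClosed (linesUnion L) :=
  L.finite_toSet.isClosed_biUnion fun l hl => (hL l hl).isClosed

theorem SimpleArrangement.eq_or_eq_of_mem {L : Finset (Set (ℝ × ℝ))} (hL : SimpleArrangement L)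
    {l₁ l₂ l : Set (ℝ × ℝ)} (h₁ : l₁ ∈ L) (h₂ : l₂ ∈ L) (hl : l ∈ L) (hne : l₁ ≠ l₂) {p : ℝ × ℝ}
    (hp₁ : p ∈ l₁) (hp₂ : p ∈ l₂) (hp : p ∈ l) : l = l₁ ∨ l = l₂ := by
  by_contra! h
  exact eq_empty_iff_forall_notMem.mp (hL.2.2 l₁ h₁ l₂ h₂ l hl hne h.1.symm h.2.symm) p
    ⟨⟨hp₁, hp₂⟩, hp⟩

theorem bounds_connectedComponentIn {U V : Set (ℝ × ℝ)} (hU : IsOpen U) (hV : Convex ℝ V)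
    {φ : ℝ × ℝ →ₗ[ℝ] ℝ} {c : ℝ} (hVU : V ∩ {q | c < φ q} ⊆ U) (hlU : ∀ q, φ q = c → q ∉ U)
    {q₀ : ℝ × ℝ} (hq₀ : q₀ ∈ V) (hq₀c : c < φ q₀) {x y : ℝ × ℝ} (hxy : x ≠ y)
    (hx : x ∈ V) (hy : y ∈ V) (hxc : φ x = c) (hyc : φ y = c) :
    Bounds {q | φ q = c} (connectedComponentIn U q₀) := by
  refine ⟨x, y, hxy, fun z hz => ?_⟩
  have hzc : φ z = c := (convex_hyperplane φ.isLinear c).segment_subset hxc hyc hz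
  have hQ : Convex ℝ (V ∩ {q | c < φ q}) := hV.inter (convex_halfSpace_gt φ.isLinear c)
  refine ⟨hzc, closure_diff_subset_frontier_connectedComponentIn hU hQ.isPreconnected hVU
    ⟨hq₀, hq₀c⟩ ⟨?_, hlU z hzc⟩⟩
  exact hV.inter_halfSpace_ge_subset_closure φ hq₀ hq₀c ⟨hV.segment_subset hx hy hz, hzc.ge⟩

theorem eventually_bounds_connectedComponentIn_of_corner {U N : Set (ℝ × ℝ)} (hU : IsOpen U)
    {φ ψ : ℝ × ℝ →ₗ[ℝ] ℝ} {p u w : ℝ × ℝ} (hN : N ∈ 𝓝 p)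
    (hcorner : ∀ q ∈ N, φ p < φ q → ψ p < ψ q → q ∈ U) (hlU : ∀ q, φ q = φ p → q ∉ U)
    (hφu : φ u = 0) (hψu : 0 < ψ u) (hφw : 0 < φ w) (hψw : 0 < ψ w) :
    ∀ᶠ t in 𝓝[>] (0 : ℝ),
      p + t • w ∈ U ∧ Bounds {q | φ q = φ p} (connectedComponentIn U (p + t • w)) := by
  obtain ⟨r, hr, hball⟩ := Metric.mem_nhds_iff.mp hN
  have hnear : ∀ v, ∀ᶠ t in 𝓝[>] (0 : ℝ), p + t • v ∈ ball p r := fun v =>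
    nhdsWithin_le_nhds (eventually_add_smul_mem (ball_mem_nhds p hr) v)
  filter_upwards [self_mem_nhdsWithin, hnear u, hnear ((2 : ℝ) • u), hnear w]
    with t (ht : 0 < t) hx hy hq₀
  -- `V ∩ {φ > φ p}` is a corner of the quadrant at `p` containing `p + t • w`, and the segment
  -- from `p + t • u` to `p + 2t • u` on the line `φ = φ p` lies in its closure.
  set V := ball p r ∩ {q | ψ p < ψ q}
  have hVU : V ∩ {q | φ p < φ q} ⊆ U := fun q ⟨⟨hqr, hqψ⟩, hqφ⟩ => hcorner q (hball hqr) hqφ hqψ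
  have hV : ∀ v, 0 < ψ v → p + t • v ∈ ball p r → p + t • v ∈ V := fun v hv hb =>
    ⟨hb, by simpa using mul_pos ht hv⟩
  have hq₀φ : φ p < φ (p + t • w) := by simpa using mul_pos ht hφw
  have hxy : p + t • u ≠ p + t • ((2 : ℝ) • u) := fun h => by
    have := congrArg ψ h
    simp only [map_add, map_smul, smul_eq_mul] at this
    linarith [mul_pos ht hψu]
  refine ⟨hVU ⟨hV w hψw hq₀, hq₀φ⟩, bounds_connectedComponentIn hU
    ((convex_ball p r).inter (convex_halfSpace_gt ψ.isLinear _)) hVU hlU (hV w hψw hq₀) hq₀φ hxy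
    (hV u hψu hx) (hV ((2 : ℝ) • u) (by simpa using hψu) hy) (by simp [hφu]) (by simp [hφu])⟩

theorem exists_cell_bounds_singleton {l : Set (ℝ × ℝ)} (hl : IsLine l) :
    ∃ c, IsCell {l} c ∧ Bounds l c := by
  obtain ⟨φ, hφ, c, rfl⟩ := hl.exists_linearMap
  have hunion : linesUnion {{q | φ q = c}} = {q | φ q = c} := by simp [linesUnion]
  obtain ⟨p, hp⟩ := LinearMap.surjective hφ c
  obtain ⟨q₀, hq₀⟩ := LinearMap.surjective hφ (c + 1)
  obtain ⟨u, hu, hu0⟩ := Submodule.exists_mem_ne_zero_of_ne_bot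
    (LinearMap.ker_ne_bot_of_finrank_lt (f := φ) (by simp))
  refine ⟨connectedComponentIn (linesUnion {{q | φ q = c}})ᶜ q₀, ⟨q₀, ?_, rfl⟩, ?_⟩ <;>
    rw [hunion]
  · simp [hq₀]
  · exact bounds_connectedComponentIn (V := univ) hl.isClosed.isOpen_compl convex_univ
      (fun q hq => hq.2.ne') (fun q hq => not_not.mpr hq) (mem_univ q₀) (by simp [hq₀])
      (x := p) (y := p + u) (by simpa [eq_comm] using hu0) (mem_univ _) (mem_univ _) hp
      (by simpa [hp] using hu)

theorem SimpleArrangement.exists_cell_bounds_of_ne {L : Finset (Set (ℝ × ℝ))}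
    (hL : SimpleArrangement L) {l₁ l₂ : Set (ℝ × ℝ)} (h₁ : l₁ ∈ L) (h₂ : l₂ ∈ L) (hne : l₁ ≠ l₂) :
    ∃ c, IsCell L c ∧ Bounds l₁ c ∧ Bounds l₂ c := by
  obtain ⟨p, hp₁, hp₂⟩ := hL.2.1 l₁ h₁ l₂ h₂ hne
  obtain ⟨φ, hφ, c₁, rfl⟩ := (hL.1 l₁ h₁).exists_linearMap
  obtain ⟨ψ, hψ, c₂, rfl⟩ := (hL.1 l₂ h₂).exists_linearMap
  obtain rfl : φ p = c₁ := hp₁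
  obtain rfl : ψ p = c₂ := hp₂
  obtain ⟨u, hφu, hψu⟩ := exists_apply_eq_zero_pos_of_levelSet_ne hψ hne
  obtain ⟨v, hψv, hφv⟩ := exists_apply_eq_zero_pos_of_levelSet_ne hφ hne.symm
  have hU : IsOpen (linesUnion L)ᶜ := (isClosed_linesUnion hL.1).isOpen_compl
  have hN := eventually_forall_mem_imp_mem (fun l hl => (hL.1 l hl).isClosed) p
  have hcorner : ∀ q ∈ {q | ∀ l ∈ L, q ∈ l → p ∈ l}, φ p < φ q → ψ p < ψ q →
      q ∈ (linesUnion L)ᶜ := by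
    intro q hq hφq hψq hqL
    obtain ⟨l, hl, hql⟩ : ∃ l ∈ L, q ∈ l := by simpa [linesUnion] using hqL
    rcases hL.eq_or_eq_of_mem h₁ h₂ hl hne rfl rfl (hq l hl hql) with rfl | rfl
    exacts [hφq.ne' hql, hψq.ne' hql]
  have hlU : ∀ l ∈ L, ∀ q ∈ l, q ∉ (linesUnion L)ᶜ := fun l hl q hq =>
    not_not.mpr (subset_linesUnion hl hq)
  have hφw : 0 < φ (u + v) := by simpa [hφu] using hφv
  have hψw : 0 < ψ (u + v) := by simpa [hψv] using hψu
  have hb₁ := eventually_bounds_connectedComponentIn_of_corner hU hN hcorner (hlU _ h₁)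
    hφu hψu hφw hψw
  have hb₂ := eventually_bounds_connectedComponentIn_of_corner hU hN
    (fun q hq hψq hφq => hcorner q hq hφq hψq) (hlU _ h₂) hψv hφv hψw hφw
  obtain ⟨t, ⟨hq₀, hb₁⟩, -, hb₂⟩ := (hb₁.and hb₂).exists
  exact ⟨_, ⟨_, hq₀, rfl⟩, hb₁, hb₂⟩

theorem SimpleArrangement.exists_cell_bounds {L : Finset (Set (ℝ × ℝ))} (hL : SimpleArrangement L)
    {l : Set (ℝ × ℝ)} (hl : l ∈ L) : ∃ c, IsCell L c ∧ Bounds l c := by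
  by_cases h : ∃ l' ∈ L, l' ≠ l
  · obtain ⟨l', hl', hne⟩ := h
    obtain ⟨c, hc, hlc, -⟩ := hL.exists_cell_bounds_of_ne hl hl' hne.symm
    exact ⟨c, hc, hlc⟩
  · obtain rfl : L = {l} := Finset.eq_singleton_iff_unique_mem.mpr
      ⟨hl, fun l' hl' => by_contra fun hne => h ⟨l', hl', hne⟩⟩
    exact exists_cell_bounds_singleton (hL.1 l hl)

theorem stmt15 (L : Finset (Set (ℝ × ℝ))) (hL : SimpleArrangement L) :
    ∃ C : Finset (Set (ℝ × ℝ)), (∀ c ∈ C, IsCell L c) ∧ C.card ≤ (L.card + 1) / 2 ∧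
      ∀ l ∈ L, ∃ c ∈ C, Bounds l c :=
  Finset.exists_cover_card_le_half (IsCell L) Bounds L (fun _ hl => hL.exists_cell_bounds hl)
    fun _ hl _ hl' hne => hL.exists_cell_bounds_of_ne hl hl' hne
end

section
/- There exists a simple arrangement of n lines in which every cell is bounded by at most 4 lines, and consequently any set of cells touching all n lines has size at least n/4. -/
/-!
Line `k` is `x = (-1/2)^k y + 4^k`. The slopes zigzag around `0` with geometrically shrinking
amplitude while the intercepts grow geometrically, so lines `lo < hi` cross at a height `y` with
`(-1)^lo y` within a factor `2` of `2^lo 4^hi`; in particular no three lines are concurrent.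

A line bounding the cell of `p₀` meets the closed region where every line has its weak sign at
`p₀`. On line `i`, the sign of line `j` records on which side of their crossing a point lies, so
the sign pattern constrains the positions and parities of the lines meeting the region;
comparing crossing heights rules out five of them.
-/

theorem IsPreconnected.pos_of_pos {X α : Type*} [TopologicalSpace X] [LinearOrder α] [Zero α]
    [TopologicalSpace α] [OrderClosedTopology α] {c : Set X} {f : X → α}
    (hc : IsPreconnected c) (hf : ContinuousOn f c) (hf0 : ∀ x ∈ c, f x ≠ 0) {a b : X}
    (ha : a ∈ c) (hb : b ∈ c) (hfa : 0 < f a) : 0 < f b := by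
  by_contra! hfb
  obtain ⟨x, hx, hx0⟩ := hc.intermediate_value hb ha hf ⟨hfb, hfa.le⟩
  exact hf0 x hx hx0

theorem card_le_mul_card_of_forall_bounds {L C : Finset (Set (ℝ × ℝ))} {k : ℕ}
    (hC : ∀ c ∈ C, (boundingLines L c).ncard ≤ k) (hL : ∀ l ∈ L, ∃ c ∈ C, Bounds l c) :
    L.card ≤ k * C.card := by
  classical
  have hcard (c : Set (ℝ × ℝ)) : (boundingLines L c).ncard = (L.filter (Bounds · c)).card := by
    rw [← Set.ncard_coe_finset]
    congr 1
    ext l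
    simp [boundingLines]
  calc L.card ≤ (C.biUnion fun c => L.filter (Bounds · c)).card := by
        refine Finset.card_le_card fun l hl => ?_
        obtain ⟨c, hc, hlc⟩ := hL l hl
        exact Finset.mem_biUnion.mpr ⟨c, hc, Finset.mem_filter.mpr ⟨hl, hlc⟩⟩
    _ ≤ ∑ c ∈ C, (L.filter (Bounds · c)).card := Finset.card_biUnion_le
    _ ≤ ∑ _c ∈ C, k := Finset.sum_le_sum fun c hc => hcard c ▸ hC c hc
    _ = k * C.card := by rw [Finset.sum_const, smul_eq_mul, mul_comm]

lemma neg_one_pow_eq_of_mod_two_eq {R : Type*} [Ring R] {a b : ℕ}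
    (h : a % 2 = b % 2) : (-1 : R) ^ a = (-1) ^ b := by
  rw [neg_one_pow_eq_pow_mod_two, h, ← neg_one_pow_eq_pow_mod_two]

lemma neg_one_pow_eq_neg_of_mod_two_ne {R : Type*} [Ring R] {a b : ℕ}
    (h : a % 2 ≠ b % 2) : (-1 : R) ^ a = -(-1) ^ b := by
  rw [neg_one_pow_eq_pow_mod_two, neg_one_pow_eq_pow_mod_two (n := b)]
  rcases Nat.mod_two_eq_zero_or_one a with ha | ha <;>
    rcases Nat.mod_two_eq_zero_or_one b with hb | hb <;> simp_all

namespace ZigzagArrangement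

open Finset

noncomputable def lineFn (k : ℕ) (p : ℝ × ℝ) : ℝ := p.1 - (-1/2 : ℝ) ^ k * p.2 - 4 ^ k

def line (k : ℕ) : Set (ℝ × ℝ) := {p | lineFn k p = 0}

open Classical in
noncomputable def arrangement (n : ℕ) : Finset (Set (ℝ × ℝ)) := (range n).image line

noncomputable def crossScale (lo hi : ℕ) : ℝ := 2 ^ lo * 4 ^ hi

lemma crossScale_pos (lo hi : ℕ) : 0 < crossScale lo hi := by
  unfold crossScale; positivity

lemma crossScale_mono_left {a b : ℕ} (hi : ℕ) (h : a ≤ b) : crossScale a hi ≤ crossScale b hi := by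
  unfold crossScale; gcongr; norm_num

lemma four_mul_crossScale_le_right (lo : ℕ) {a b : ℕ} (h : a < b) :
    4 * crossScale lo a ≤ crossScale lo b := by
  have : (4 : ℝ) * 4 ^ a ≤ 4 ^ b := by
    rw [← pow_succ']; exact pow_le_pow_right₀ (by norm_num) h
  unfold crossScale; nlinarith [pow_pos (two_pos : (0 : ℝ) < 2) lo]

lemma four_mul_crossScale_le_left {a b : ℕ} (hi : ℕ) (h : a + 2 ≤ b) :
    4 * crossScale a hi ≤ crossScale b hi := by
  have : (4 : ℝ) * 2 ^ a ≤ 2 ^ b := by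
    calc (4 : ℝ) * 2 ^ a = 2 ^ (a + 2) := by ring
      _ ≤ 2 ^ b := pow_le_pow_right₀ (by norm_num) h
  unfold crossScale; nlinarith [pow_pos (by norm_num : (0 : ℝ) < 4) hi]

lemma one_sub_neg_half_pow_mem {m : ℕ} (hm : m ≠ 0) :
    1 / 2 ≤ 1 - (-1/2 : ℝ) ^ m ∧ 1 - (-1/2 : ℝ) ^ m ≤ 3 / 2 := by
  have : |(-1/2 : ℝ) ^ m| ≤ 1 / 2 := by
    rw [abs_pow, show |(-1/2 : ℝ)| = 1 / 2 by norm_num]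
    exact pow_le_of_le_one (by norm_num) (by norm_num) hm
  constructor <;> linarith [abs_le.mp this]

lemma two_pow_mul_lineFn_sub {lo hi : ℕ} (h : lo ≤ hi) (p : ℝ × ℝ) :
    2 ^ lo * (lineFn hi p - lineFn lo p) =
      (1 - (-1/2 : ℝ) ^ (hi - lo)) * ((-1) ^ lo * p.2) - 2 ^ lo * (4 ^ hi - 4 ^ lo) := by
  obtain ⟨m, rfl⟩ := Nat.exists_eq_add_of_le h
  have h2 : (2 : ℝ) ^ lo * (-1/2) ^ lo = (-1) ^ lo := by rw [← mul_pow]; norm_num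
  simp only [lineFn, Nat.add_sub_cancel_left, pow_add]
  linear_combination ((1 - (-1/2 : ℝ) ^ m) * p.2) * h2

lemma half_crossScale_le_of_lineFn_le {lo hi : ℕ} (h : lo < hi) {p : ℝ × ℝ}
    (hp : lineFn lo p ≤ lineFn hi p) : crossScale lo hi / 2 ≤ (-1) ^ lo * p.2 := by
  have hid := two_pow_mul_lineFn_sub h.le p
  obtain ⟨hs₁, hs₂⟩ := one_sub_neg_half_pow_mem (Nat.sub_ne_zero_of_lt h)
  have h4 := four_mul_crossScale_le_right lo h
  have hpos := crossScale_pos lo hi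
  set X := (-1 : ℝ) ^ lo * p.2
  set s := 1 - (-1/2 : ℝ) ^ (hi - lo)
  have hsX : 3 / 4 * crossScale lo hi ≤ s * X := by
    have : 0 ≤ 2 ^ lo * (lineFn hi p - lineFn lo p) := by
      have := sub_nonneg.mpr hp; positivity
    unfold crossScale at *; linarith
  have hX : 0 < X := by
    by_contra! hX
    nlinarith
  nlinarith [mul_le_mul_of_nonneg_right hs₂ hX.le]

lemma lt_two_mul_crossScale_of_lineFn_le {lo hi : ℕ} (h : lo < hi) {p : ℝ × ℝ}
    (hp : lineFn hi p ≤ lineFn lo p) : (-1) ^ lo * p.2 < 2 * crossScale lo hi := by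
  have hid := two_pow_mul_lineFn_sub h.le p
  obtain ⟨hs₁, hs₂⟩ := one_sub_neg_half_pow_mem (Nat.sub_ne_zero_of_lt h)
  have hpos := crossScale_pos lo hi
  have h4lo : (0 : ℝ) < 2 ^ lo * 4 ^ lo := by positivity
  set X := (-1 : ℝ) ^ lo * p.2
  set s := 1 - (-1/2 : ℝ) ^ (hi - lo)
  have hsX : s * X < crossScale lo hi := by
    have : 2 ^ lo * (lineFn hi p - lineFn lo p) ≤ 0 :=
      mul_nonpos_of_nonneg_of_nonpos (by positivity) (sub_nonpos.mpr hp)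
    unfold crossScale at *; linarith
  rcases le_or_gt X 0 with hX | hX
  · linarith
  · nlinarith

lemma crossScale_bounds_of_mem_line_inter {lo hi : ℕ} (h : lo < hi) {p : ℝ × ℝ}
    (hlo : p ∈ line lo) (hhi : p ∈ line hi) :
    crossScale lo hi / 2 ≤ |p.2| ∧ |p.2| < 2 * crossScale lo hi := by
  have hle : lineFn lo p = lineFn hi p := hlo.trans hhi.symm
  have h₁ := half_crossScale_le_of_lineFn_le h hle.le
  have h₂ := lt_two_mul_crossScale_of_lineFn_le h hle.ge
  have habs : |p.2| = (-1) ^ lo * p.2 := by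
    rw [← abs_of_pos (h₁.trans_lt' (by linarith [crossScale_pos lo hi])), abs_mul, abs_pow,
      abs_neg, abs_one, one_pow, one_mul]
  exact ⟨habs ▸ h₁, habs ▸ h₂⟩

lemma not_mem_line_inter_three {i j k : ℕ} (hij : i < j) (hjk : j < k) {p : ℝ × ℝ}
    (hi : p ∈ line i) (hj : p ∈ line j) (hk : p ∈ line k) : False := by
  have h₁ := (crossScale_bounds_of_mem_line_inter hij hi hj).2
  have h₂ := (crossScale_bounds_of_mem_line_inter hjk hj hk).1
  have := crossScale_mono_left j hij.le
  have := four_mul_crossScale_le_right j hjk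
  linarith

lemma line_inter_line_nonempty {i j : ℕ} (h : i < j) : (line i ∩ line j).Nonempty := by
  obtain ⟨hs₁, -⟩ := one_sub_neg_half_pow_mem (Nat.sub_ne_zero_of_lt h)
  set s := 1 - (-1/2 : ℝ) ^ (j - i)
  set y := (-1) ^ i * (2 ^ i * (4 ^ j - 4 ^ i)) / s
  have hsq : ((-1 : ℝ) ^ i) * (-1) ^ i = 1 := by rw [← mul_pow]; norm_num
  have hp : lineFn i ((-1/2 : ℝ) ^ i * y + 4 ^ i, y) = 0 := by simp only [lineFn]; ring
  refine ⟨_, hp, ?_⟩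
  have hid := two_pow_mul_lineFn_sub h.le ((-1/2 : ℝ) ^ i * y + 4 ^ i, y)
  rw [hp, sub_zero] at hid
  have hX : (-1) ^ i * y = 2 ^ i * (4 ^ j - 4 ^ i) / s := by
    simp only [y]; rw [← mul_div_assoc, ← mul_assoc, hsq, one_mul]
  rw [hX, mul_div_cancel₀ _ (by positivity), sub_self] at hid
  exact (mul_eq_zero.mp hid).resolve_left (by positivity)

lemma line_injective : Function.Injective line := by
  intro i j hij
  have hi : ((4 : ℝ) ^ i, (0 : ℝ)) ∈ line i := by simp [line, lineFn]
  rw [hij] at hi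
  have : (4 : ℝ) ^ i = 4 ^ j := by simpa [line, lineFn, sub_eq_zero] using hi
  exact pow_right_injective₀ (by norm_num) (by norm_num) this

lemma isLine_line (k : ℕ) : IsLine (line k) :=
  ⟨1, -(-1/2 : ℝ) ^ k, 4 ^ k, by simp, by
    ext p; simp only [line, lineFn, Set.mem_ofPred_eq]; constructor <;> intro h <;> linarith⟩

lemma mem_arrangement {n : ℕ} {l : Set (ℝ × ℝ)} : l ∈ arrangement n ↔ ∃ i < n, line i = l := by
  simp [arrangement]

lemma card_arrangement (n : ℕ) : (arrangement n).card = n := by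
  rw [arrangement, card_image_of_injective _ line_injective, card_range]

lemma line_inter_line_inter_line_eq_empty {i j k : ℕ} (hij : i ≠ j) (hik : i ≠ k) (hjk : j ≠ k) :
    line i ∩ line j ∩ line k = ∅ := by
  refine Set.eq_empty_of_forall_notMem fun p ⟨⟨hi, hj⟩, hk⟩ => ?_
  rcases lt_or_gt_of_ne hij with h₁ | h₁ <;> rcases lt_or_gt_of_ne hik with h₂ | h₂ <;>
    rcases lt_or_gt_of_ne hjk with h₃ | h₃
  all_goals first
    | omega
    | exact not_mem_line_inter_three (by omega) (by omega) hi hj hk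
    | exact not_mem_line_inter_three (by omega) (by omega) hi hk hj
    | exact not_mem_line_inter_three (by omega) (by omega) hj hi hk
    | exact not_mem_line_inter_three (by omega) (by omega) hj hk hi
    | exact not_mem_line_inter_three (by omega) (by omega) hk hi hj
    | exact not_mem_line_inter_three (by omega) (by omega) hk hj hi

theorem simpleArrangement_arrangement (n : ℕ) : SimpleArrangement (arrangement n) := by
  simp only [SimpleArrangement, mem_arrangement]
  refine ⟨?_, ?_, ?_⟩
  · rintro _ ⟨k, -, rfl⟩
    exact isLine_line k
  · rintro _ ⟨i, -, rfl⟩ _ ⟨j, -, rfl⟩ hij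
    rcases lt_or_gt_of_ne (line_injective.ne_iff.mp hij) with h | h
    · exact line_inter_line_nonempty h
    · exact Set.inter_comm _ _ ▸ line_inter_line_nonempty h
  · rintro _ ⟨i, -, rfl⟩ _ ⟨j, -, rfl⟩ _ ⟨k, -, rfl⟩ hij hik hjk
    exact line_inter_line_inter_line_eq_empty (line_injective.ne_iff.mp hij)
      (line_injective.ne_iff.mp hik) (line_injective.ne_iff.mp hjk)

def signRegion (n : ℕ) (s : ℕ → Prop) : Set (ℝ × ℝ) :=
  {p | ∀ j < n, (s j → 0 ≤ lineFn j p) ∧ (¬ s j → lineFn j p ≤ 0)}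

section SignRegion

variable {n : ℕ} {s : ℕ → Prop} {i : ℕ} {p : ℝ × ℝ}

lemma half_crossScale_le_of_pos_above (hp : p ∈ line i ∩ signRegion n s) {j : ℕ} (hij : i < j)
    (hj : j < n) (hs : s j) : crossScale i j / 2 ≤ (-1) ^ i * p.2 :=
  half_crossScale_le_of_lineFn_le hij (hp.1.trans_le ((hp.2 j hj).1 hs))

lemma lt_two_mul_crossScale_of_neg_above (hp : p ∈ line i ∩ signRegion n s) {j : ℕ}
    (hij : i < j) (hj : j < n) (hs : ¬ s j) : (-1) ^ i * p.2 < 2 * crossScale i j :=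
  lt_two_mul_crossScale_of_lineFn_le hij (((hp.2 j hj).2 hs).trans_eq hp.1.symm)

lemma lt_two_mul_crossScale_of_pos_below (hp : p ∈ line i ∩ signRegion n s) {k : ℕ}
    (hki : k < i) (hi : i < n) (hs : s k) : (-1) ^ k * p.2 < 2 * crossScale k i :=
  lt_two_mul_crossScale_of_lineFn_le hki (hp.1.trans_le ((hp.2 k (hki.trans hi)).1 hs))

lemma half_crossScale_le_of_neg_below (hp : p ∈ line i ∩ signRegion n s) {k : ℕ}
    (hki : k < i) (hi : i < n) (hs : ¬ s k) : crossScale k i / 2 ≤ (-1) ^ k * p.2 :=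
  half_crossScale_le_of_lineFn_le hki (((hp.2 k (hki.trans hi)).2 hs).trans_eq hp.1.symm)

lemma pos_of_pos_above (hp : p ∈ line i ∩ signRegion n s) {j k : ℕ} (hik : i < k) (hkj : k < j)
    (hj : j < n) (hs : s j) : s k := by
  by_contra hsk
  have := half_crossScale_le_of_pos_above hp (hik.trans hkj) hj hs
  have := lt_two_mul_crossScale_of_neg_above hp hik (hkj.trans hj) hsk
  have := four_mul_crossScale_le_right i hkj
  have := crossScale_pos i k
  linarith

lemma mod_two_eq_of_neg_below (hp : p ∈ line i ∩ signRegion n s) (hi : i < n) {k k' : ℕ}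
    (hk : k < i) (hk' : k' < i) (hs : ¬ s k) (hs' : ¬ s k') : k % 2 = k' % 2 := by
  by_contra hne
  have h := half_crossScale_le_of_neg_below hp hk hi hs
  have h' := half_crossScale_le_of_neg_below hp hk' hi hs'
  rw [neg_one_pow_eq_neg_of_mod_two_ne hne] at h
  have := crossScale_pos k i
  have := crossScale_pos k' i
  linarith

lemma pos_iff_mod_two_ne_of_pos_above (hp : p ∈ line i ∩ signRegion n s) {j k : ℕ}
    (hij : i < j) (hj : j < n) (hs : s j) (hki : k < i) : s k ↔ k % 2 ≠ i % 2 := by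
  have hX := half_crossScale_le_of_pos_above hp hij hj hs
  have := crossScale_pos k i
  constructor
  · intro hsk hpar
    have h := lt_two_mul_crossScale_of_pos_below hp hki (hij.trans hj) hsk
    rw [neg_one_pow_eq_of_mod_two_eq hpar] at h
    have := four_mul_crossScale_le_right i hij
    have := crossScale_mono_left i hki.le
    linarith
  · intro hpar
    by_contra hsk
    have h := half_crossScale_le_of_neg_below hp hki (hij.trans hj) hsk
    rw [neg_one_pow_eq_neg_of_mod_two_ne hpar] at h
    have := crossScale_pos i j
    linarith

lemma mod_two_ne_of_pos_lt_neg_below (hp : p ∈ line i ∩ signRegion n s) (hi : i < n)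
    {m k : ℕ} (hmk : m < k) (hki : k < i) (hm : s m) (hk : ¬ s k) : m % 2 ≠ k % 2 := by
  intro hpar
  have h₁ := lt_two_mul_crossScale_of_pos_below hp (hmk.trans hki) hi hm
  have h₂ := half_crossScale_le_of_neg_below hp hki hi hk
  rw [neg_one_pow_eq_of_mod_two_eq hpar] at h₁
  have := four_mul_crossScale_le_left i (show m + 2 ≤ k by omega)
  linarith

lemma false_of_three_meet_below_pos {t₁ t₂ t₃ j : ℕ} (h₁ : (line t₁ ∩ signRegion n s).Nonempty)
    (h₂ : (line t₂ ∩ signRegion n s).Nonempty) (h₃ : (line t₃ ∩ signRegion n s).Nonempty)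
    (h₁₂ : t₁ < t₂) (h₂₃ : t₂ < t₃) (h₃j : t₃ < j) (hj : j < n) (hs : s j) : False := by
  obtain ⟨p₁, hp₁⟩ := h₁
  obtain ⟨p₂, hp₂⟩ := h₂
  obtain ⟨p₃, hp₃⟩ := h₃
  have hs₂ := pos_of_pos_above hp₁ h₁₂ (h₂₃.trans h₃j) hj hs
  have h₂₃' := (pos_iff_mod_two_ne_of_pos_above hp₃ h₃j hj hs h₂₃).mp hs₂
  have h₁₃ := pos_iff_mod_two_ne_of_pos_above hp₃ h₃j hj hs (h₁₂.trans h₂₃)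
  have h₁₂' := pos_iff_mod_two_ne_of_pos_above hp₂ (h₂₃.trans h₃j) hj hs h₁₂
  rw [h₁₃] at h₁₂'
  omega

end SignRegion

open Classical in
noncomputable def meetingIndices (n : ℕ) (s : ℕ → Prop) : Finset ℕ :=
  (range n).filter fun i => (line i ∩ signRegion n s).Nonempty

theorem card_meetingIndices_le_four (n : ℕ) (s : ℕ → Prop) : (meetingIndices n s).card ≤ 4 := by
  by_contra! h5
  obtain ⟨t, hts, htc⟩ := exists_subset_card_eq (show 5 ≤ (meetingIndices n s).card by omega)
  set f := t.orderEmbOfFin htc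
  have hmeet (a : Fin 5) : f a < n ∧ (line (f a) ∩ signRegion n s).Nonempty := by
    simpa [meetingIndices] using hts (t.orderEmbOfFin_mem htc a)
  have hf {a b : Fin 5} (h : a < b) : f a < f b := f.strictMono h
  by_cases h₂ : ∃ j, f 2 < j ∧ j < n ∧ s j
  · obtain ⟨j, h₂j, hj, hs⟩ := h₂
    exact false_of_three_meet_below_pos (hmeet 0).2 (hmeet 1).2 (hmeet 2).2
      (hf (by decide)) (hf (by decide)) h₂j hj hs
  push Not at h₂
  obtain ⟨p₀, hp₀⟩ := (hmeet 0).2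
  obtain ⟨p₄, hp₄⟩ := (hmeet 4).2
  have h₀₁ := hf (show (0 : Fin 5) < 1 by decide)
  have h₁₂ := hf (show (1 : Fin 5) < 2 by decide)
  have h₂₃ := hf (show (2 : Fin 5) < 3 by decide)
  have h₃₄ := hf (show (3 : Fin 5) < 4 by decide)
  have h₄ := (hmeet 4).1
  by_cases h₁ : ∃ j, f 1 < j ∧ j < n ∧ s j
  · obtain ⟨j, h₁j, hj, hs⟩ := h₁
    have hj₂ : j ≤ f 2 := by
      by_contra! hj₂
      exact h₂ j hj₂ hj hs
    have hs' := pos_of_pos_above hp₀ (show f 0 < j - 1 by omega) (by omega) hj hs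
    have hs₃ := h₂ (f 3) h₂₃ (hmeet 3).1
    rcases (show (j - 1) % 2 = f 3 % 2 ∨ j % 2 = f 3 % 2 by omega) with hpar | hpar
    · exact mod_two_ne_of_pos_lt_neg_below hp₄ h₄ (by omega) h₃₄ hs' hs₃ hpar
    · exact mod_two_ne_of_pos_lt_neg_below hp₄ h₄ (by omega) h₃₄ hs hs₃ hpar
  · push Not at h₁
    have := mod_two_eq_of_neg_below hp₄ h₄ (k := f 1 + 1) (k' := f 1 + 2)
      (by omega) (by omega) (h₁ _ (by omega) (by omega)) (h₁ _ (by omega) (by omega))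
    omega

lemma continuous_lineFn (k : ℕ) : Continuous (lineFn k) := by
  unfold lineFn; fun_prop

lemma line_subset_linesUnion {n j : ℕ} (hj : j < n) : line j ⊆ linesUnion (arrangement n) :=
  fun _ hq => Set.mem_biUnion (mem_arrangement.mpr ⟨j, hj, rfl⟩) hq

lemma closure_cell_subset_signRegion {n : ℕ} {p₀ : ℝ × ℝ}
    (hp₀ : p₀ ∈ (linesUnion (arrangement n))ᶜ) :
    closure (connectedComponentIn (linesUnion (arrangement n))ᶜ p₀) ⊆
      signRegion n (fun j => 0 < lineFn j p₀) := by
  set c := connectedComponentIn (linesUnion (arrangement n))ᶜ p₀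
  have hc : IsPreconnected c := isPreconnected_connectedComponentIn
  have hp₀c : p₀ ∈ c := mem_connectedComponentIn hp₀
  intro q hq j hj
  have hf := continuous_lineFn j
  have hne : ∀ x ∈ c, lineFn j x ≠ 0 := fun x hx h0 =>
    connectedComponentIn_subset _ _ hx (line_subset_linesUnion hj h0)
  constructor
  · intro hpos
    have hcpos : c ⊆ {x | 0 < lineFn j x} := fun x hx =>
      hc.pos_of_pos hf.continuousOn hne hp₀c hx hpos
    exact closure_lt_subset_le continuous_const hf (closure_mono hcpos hq)
  · intro hnpos
    have hneg : 0 < -lineFn j p₀ := neg_pos.mpr ((not_lt.mp hnpos).lt_of_ne (hne p₀ hp₀c))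
    have hcneg : c ⊆ {x | lineFn j x < 0} := fun x hx =>
      neg_pos.mp (hc.pos_of_pos hf.neg.continuousOn (fun y hy => neg_ne_zero.mpr (hne y hy))
        hp₀c hx hneg)
    exact closure_lt_subset_le hf continuous_const (closure_mono hcneg hq)

lemma boundingLines_cell_subset {n : ℕ} {p₀ : ℝ × ℝ} (hp₀ : p₀ ∈ (linesUnion (arrangement n))ᶜ) :
    boundingLines (arrangement n) (connectedComponentIn (linesUnion (arrangement n))ᶜ p₀) ⊆
      line '' meetingIndices n (fun j => 0 < lineFn j p₀) := by
  rintro l ⟨hl, p, q, -, hpq⟩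
  obtain ⟨i, hi, rfl⟩ := mem_arrangement.mp hl
  obtain ⟨hpi, hpc⟩ := hpq (left_mem_segment ℝ p q)
  refine ⟨i, ?_, rfl⟩
  simp only [meetingIndices, coe_filter, mem_range, Set.mem_ofPred_eq]
  exact ⟨hi, p, hpi, closure_cell_subset_signRegion hp₀ (frontier_subset_closure hpc)⟩

theorem ncard_boundingLines_le_four {n : ℕ} {c : Set (ℝ × ℝ)} (hc : IsCell (arrangement n) c) :
    (boundingLines (arrangement n) c).ncard ≤ 4 := by
  obtain ⟨p₀, hp₀, rfl⟩ := hc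
  set I := meetingIndices n (fun j => 0 < lineFn j p₀)
  calc _ ≤ (line '' I).ncard := Set.ncard_le_ncard (boundingLines_cell_subset hp₀) (Set.toFinite _)
    _ ≤ (I : Set ℕ).ncard := Set.ncard_image_le I.finite_toSet
    _ = I.card := Set.ncard_coe_finset I
    _ ≤ 4 := card_meetingIndices_le_four n _

end ZigzagArrangement

theorem stmt17 (n : ℕ) : ∃ L : Finset (Set (ℝ × ℝ)), SimpleArrangement L ∧ L.card = n ∧
    (∀ c, IsCell L c → (boundingLines L c).ncard ≤ 4) ∧
    ∀ C : Finset (Set (ℝ × ℝ)), (∀ c ∈ C, IsCell L c) →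
      (∀ l ∈ L, ∃ c ∈ C, Bounds l c) → (n : ℝ) / 4 ≤ (C.card : ℝ) := by
  open ZigzagArrangement in
  exact ⟨arrangement n, simpleArrangement_arrangement n, card_arrangement n,
    fun c hc => ncard_boundingLines_le_four hc, fun C hC hL => by
      have h := card_le_mul_card_of_forall_bounds
        (fun c hc => ncard_boundingLines_le_four (hC c hc)) hL
      rw [card_arrangement] at h
      rw [div_le_iff₀ (by norm_num)]
      exact_mod_cast (by omega : n ≤ C.card * 4)⟩
end
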